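/- arXiv:2210.09476 — 7 statements merged into one kernel-verified Lean document; each statement's English description precedes it below -/
import Mathlib

section
/- The assignment sending an augmented simplicial set S to its set of nondegenerate cells, and sending a morphism α : S → S' to the function mapping a nondegenerate cell x of S to the unique nondegenerate cell (αx)' generating αx (via the Eilenberg–Zilber lemma), is a functor from augmented simplicial sets to sets. -/
/-- An augmented simplicial set: a presheaf on the augmented simplex category Δ₊,
whose objects are the finite linear orders `Fin m` (with `Fin 0 = ∅` the augmented
level) and whose morphisms are monotone maps. -/
structure ASSet where
  obj : ℕ → Type*
  map : ∀ {m n : ℕ}, (Fin m →o Fin n) → obj n → obj m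
  map_id : ∀ (n : ℕ) (x : obj n), map (OrderHom.id) x = x
  map_comp : ∀ {m n k : ℕ} (f : Fin m →o Fin n) (g : Fin n →o Fin k) (x : obj k),
      map (g.comp f) x = map f (map g x)

/-- A cell is degenerate if it is the image of some cell under a non-injective
morphism of Δ₊. -/
def ASSet.Degenerate (S : ASSet) {n : ℕ} (x : S.obj n) : Prop :=
  ∃ (m : ℕ) (f : Fin n →o Fin m), ¬ Function.Injective f ∧ ∃ y : S.obj m, x = S.map f y

/-- `y` is the nondegenerate cell generating `x` (as in the Eilenberg–Zilber lemma):
`y` is nondegenerate and `x` is obtained from `y` by a surjection of Δ₊. -/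
def ASSet.IsGenerator (S : ASSet) {n m : ℕ} (x : S.obj n) (y : S.obj m) : Prop :=
  ¬ S.Degenerate y ∧ ∃ f : Fin n →o Fin m, Function.Surjective f ∧ x = S.map f y

/-- A morphism of augmented simplicial sets (a natural transformation). -/
structure ASHom (S S' : ASSet) where
  app : ∀ n, S.obj n → S'.obj n
  naturality : ∀ {m n : ℕ} (f : Fin m →o Fin n) (x : S.obj n),
      app m (S.map f x) = S'.map f (app n x)

/-- A surjective monotone map between `Fin` types has a monotone section. -/
lemma aux_exists_section {n m : ℕ} (f : Fin n →o Fin m) (hf : Function.Surjective f) :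
    ∃ s : Fin m →o Fin n, ∀ i, f (s i) = i := by
  have hne : ∀ i : Fin m, (Finset.univ.filter (fun j => f j = i)).Nonempty := by
    intro i
    obtain ⟨j, hj⟩ := hf i
    exact ⟨j, by simp [hj]⟩
  have hmem : ∀ i, f ((Finset.univ.filter (fun j => f j = i)).min' (hne i)) = i := by
    intro i
    have := (Finset.univ.filter (fun j => f j = i)).min'_mem (hne i)
    simpa using this
  refine ⟨⟨fun i => (Finset.univ.filter (fun j => f j = i)).min' (hne i), ?_⟩, hmem⟩
  intro i i' h
  by_contra hlt
  push_neg at hlt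
  have hle : f ((Finset.univ.filter (fun j => f j = i')).min' (hne i'))
      ≤ f ((Finset.univ.filter (fun j => f j = i)).min' (hne i)) := f.monotone hlt.le
  rw [hmem, hmem] at hle
  have hii : i = i' := le_antisymm h hle
  subst hii
  exact absurd rfl hlt.ne

/-- An injective monotone endomap of `Fin n` is the identity. -/
lemma aux_inj_id {n : ℕ} (f : Fin n →o Fin n) (hf : Function.Injective f) :
    f = OrderHom.id := by
  have hs : StrictMono (f : Fin n → Fin n) := f.monotone.strictMono_of_injective hf
  have hsurj : Function.Surjective f := Finite.injective_iff_surjective.mp hf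
  let e := StrictMono.orderIsoOfSurjective (f : Fin n → Fin n) hs hsurj
  ext i
  have h1 : e i = f i := rfl
  have h2 : ((e i : Fin n) : ℕ) = (i : ℕ) := Fin.coe_orderIso_apply e i
  have : f i = i := Fin.ext (by rw [← h1, h2])
  simp [this]

/-- Uniqueness in the Eilenberg–Zilber lemma: two nondegenerate generators of the
same cell coincide. -/
lemma aux_generator_unique (S : ASSet) {n k k' : ℕ} (u : S.obj n)
    (z : S.obj k) (w : S.obj k') (hz : S.IsGenerator u z) (hw : S.IsGenerator u w) :
    (⟨k, z⟩ : Σ j, S.obj j) = ⟨k', w⟩ := by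
  obtain ⟨hznd, f, hfsurj, hfu⟩ := hz
  obtain ⟨hwnd, g, hgsurj, hgu⟩ := hw
  -- from a surjection t : Fin a →o Fin b and a nondegenerate cell obtained along
  -- a map h, deduce injectivity, etc. First: build the comparison maps.
  obtain ⟨s, hs⟩ := aux_exists_section f hfsurj
  obtain ⟨t, ht⟩ := aux_exists_section g hgsurj
  have hfs : f.comp s = OrderHom.id := by ext i; simp [hs i]
  have hgt : g.comp t = OrderHom.id := by ext i; simp [ht i]
  have hz' : z = S.map (g.comp s) w := by
    have : S.map s u = z := by
      rw [hfu, ← S.map_comp, hfs, S.map_id]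
    rw [← this, hgu, ← S.map_comp]
  have hw' : w = S.map (f.comp t) z := by
    have : S.map t u = w := by
      rw [hgu, ← S.map_comp, hgt, S.map_id]
    rw [← this, hfu, ← S.map_comp]
  have hinj1 : Function.Injective (g.comp s) := by
    by_contra h
    exact hznd ⟨k', g.comp s, h, w, hz'⟩
  have hinj2 : Function.Injective (f.comp t) := by
    by_contra h
    exact hwnd ⟨k, f.comp t, h, z, hw'⟩
  have hkk1 : k ≤ k' := by
    simpa using Fintype.card_le_of_injective _ hinj1
  have hkk2 : k' ≤ k := by
    simpa using Fintype.card_le_of_injective _ hinj2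
  have hkk : k = k' := le_antisymm hkk1 hkk2
  subst hkk
  have : g.comp s = OrderHom.id := aux_inj_id _ hinj1
  rw [this, S.map_id] at hz'
  rw [hz']

/-- The assignment `D` sending an augmented simplicial set to its set of nondegenerate
cells, and a morphism `α` to the map sending a nondegenerate cell `x` to the unique
nondegenerate cell `(αx)'` generating `αx`, is functorial: it preserves identities
(the generator of a nondegenerate cell `x` is `x` itself, so `D` of the identity is
the identity) and composition (`D(β ∘ α) x = D β (D α x)`). -/
theorem nondegenerate_cells_functor :
    -- preservation of identities: the generator of a nondegenerate cell is itself
    (∀ (S : ASSet) (n : ℕ) (x : S.obj n), ¬ S.Degenerate x →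
      ∀ (m : ℕ) (y : S.obj m), S.IsGenerator x y →
        (⟨n, x⟩ : Σ k, S.obj k) = ⟨m, y⟩) ∧
    -- preservation of composition
    (∀ (S S' S'' : ASSet) (α : ASHom S S') (β : ASHom S' S'')
      (n : ℕ) (x : S.obj n), ¬ S.Degenerate x →
      ∀ (m : ℕ) (y : S'.obj m), S'.IsGenerator (α.app n x) y →
      ∀ (k : ℕ) (z : S''.obj k), S''.IsGenerator (β.app m y) z →
      ∀ (k' : ℕ) (w : S''.obj k'), S''.IsGenerator (β.app n (α.app n x)) w →
        (⟨k, z⟩ : Σ j, S''.obj j) = ⟨k', w⟩) := by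
  constructor
  · intro S n x hx m y hy
    have hxx : S.IsGenerator x x :=
      ⟨hx, OrderHom.id, Function.surjective_id, (S.map_id n x).symm⟩
    exact aux_generator_unique S x x y hxx hy
  · intro S S' S'' α β n x _ m y hy k z hz k' w hw
    obtain ⟨_, f, hfsurj, hfy⟩ := hy
    obtain ⟨hznd, g, hgsurj, hgz⟩ := hz
    have key : β.app n (α.app n x) = S''.map (g.comp f) z := by
      rw [hfy, β.naturality, hgz, ← S''.map_comp]
    have hzgen : S''.IsGenerator (β.app n (α.app n x)) z :=
      ⟨hznd, g.comp f, hgsurj.comp hfsurj, key⟩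
    exact aux_generator_unique S'' _ z w hzgen hw
end

section
/- The meet of two maximal covers U and W of a finite topological space, defined as the set of maximal elements (under inclusion) of L_U ∩ L_W, where L_U is the set of open sets contained in some member of U, is itself a maximal cover. -/
variable {X : Type*}

/-- A maximal cover of `(X, T)`: a family of open sets whose union is `X`,
which is an antichain under inclusion. -/
def IsMaxCover (T : TopologicalSpace X) (𝒰 : Set (Set X)) : Prop :=
  (∀ U ∈ 𝒰, @IsOpen X T U) ∧ ⋃₀ 𝒰 = Set.univ ∧ IsAntichain (· ⊆ ·) 𝒰

/-- `L_𝒰`: the set of open sets contained in some member of `𝒰`. -/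
def lowerSet' (T : TopologicalSpace X) (𝒰 : Set (Set X)) : Set (Set X) :=
  {U | @IsOpen X T U ∧ ∃ V ∈ 𝒰, U ⊆ V}

/-- The meet of two maximal covers: the maximal elements (under inclusion)
of `L_𝒰 ∩ L_𝒲`. -/
def covMeet (T : TopologicalSpace X) (𝒰 𝒲 : Set (Set X)) : Set (Set X) :=
  {U ∈ lowerSet' T 𝒰 ∩ lowerSet' T 𝒲 | ¬ ∃ V ∈ lowerSet' T 𝒰 ∩ lowerSet' T 𝒲, U ⊂ V}

lemma exists_mem_covMeet [Finite X] (T : TopologicalSpace X) (𝒰 𝒲 : Set (Set X))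
    {A : Set X} (hA : A ∈ lowerSet' T 𝒰 ∩ lowerSet' T 𝒲) :
    ∃ M ∈ covMeet T 𝒰 𝒲, A ⊆ M := by
  set S : Set (Set X) := {B ∈ lowerSet' T 𝒰 ∩ lowerSet' T 𝒲 | A ⊆ B}
  have hSfin : S.Finite := Set.toFinite S
  have hAS : A ∈ S := ⟨hA, subset_rfl⟩
  obtain ⟨M, hMS, hmax⟩ : ∃ M ∈ S, ∀ V ∈ S, id M ≤ id V → id M = id V := by
    obtain ⟨M, hMS, h⟩ := Set.Finite.exists_maximalFor id S hSfin ⟨A, hAS⟩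
    exact ⟨M, hMS, fun V hV hle => le_antisymm hle (h hV hle)⟩
  refine ⟨M, ⟨hMS.1, ?_⟩, hMS.2⟩
  rintro ⟨V, hV, hMV⟩
  have hVS : V ∈ S := ⟨hV, hMS.2.trans hMV.le⟩
  exact hMV.ne (hmax V hVS hMV.le)

/-- The meet of two maximal covers of a finite topological space is a maximal cover. -/
theorem covMeet_isMaxCover [Finite X] (T : TopologicalSpace X) (𝒰 𝒲 : Set (Set X))
    (h𝒰 : IsMaxCover T 𝒰) (h𝒲 : IsMaxCover T 𝒲) :
    IsMaxCover T (covMeet T 𝒰 𝒲) := by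
  refine ⟨fun U hU => hU.1.1.1, ?_, ?_⟩
  · apply Set.eq_univ_of_forall
    intro x
    have hx𝒰 : x ∈ ⋃₀ 𝒰 := h𝒰.2.1 ▸ Set.mem_univ x
    have hx𝒲 : x ∈ ⋃₀ 𝒲 := h𝒲.2.1 ▸ Set.mem_univ x
    obtain ⟨U, hU, hxU⟩ := hx𝒰
    obtain ⟨W, hW, hxW⟩ := hx𝒲
    have hUW : U ∩ W ∈ lowerSet' T 𝒰 ∩ lowerSet' T 𝒲 :=
      ⟨⟨(h𝒰.1 U hU).inter (h𝒲.1 W hW), U, hU, Set.inter_subset_left⟩,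
       ⟨(h𝒰.1 U hU).inter (h𝒲.1 W hW), W, hW, Set.inter_subset_right⟩⟩
    obtain ⟨M, hM, hsub⟩ := exists_mem_covMeet T 𝒰 𝒲 hUW
    exact ⟨M, hM, hsub ⟨hxU, hxW⟩⟩
  · intro A hA B hB hne hAB
    exact hA.2 ⟨B, hB.1, lt_of_le_of_ne hAB hne⟩
end

section
/- Representing a surjective monotone map f : ⟨m⟩ → ⟨n⟩ by the tuple (f₀,...,f_n) of fiber sizes, the map corresponding to (max(f₀,g₀),...,max(f_n,g_n)) is the meet of f and g in the factorization preorder on surjections onto ⟨n⟩. -/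
/-- `f` factors through `g`: `f = g ∘ h` for some surjective monotone `h`. -/
def FactorsThru {n m₁ m₂ : ℕ} (f : Fin m₁ →o Fin n) (g : Fin m₂ →o Fin n) : Prop :=
  ∃ h : Fin m₁ →o Fin m₂, Function.Surjective h ∧ ⇑f = ⇑g ∘ ⇑h

/-- The size of the fiber of `f` over `i`. -/
def fiberSize {m n : ℕ} (f : Fin m →o Fin n) (i : Fin n) : ℕ :=
  (Finset.univ.filter fun j => f j = i).card

namespace MaxFibersAux

/-- A downward closed subset of `Fin m` is an initial segment. -/
lemma mem_iff_lt_card {m : ℕ} (S : Finset (Fin m))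
    (hS : ∀ ⦃j j' : Fin m⦄, j' ≤ j → j ∈ S → j' ∈ S) (j : Fin m) :
    j ∈ S ↔ (j : ℕ) < S.card := by
  constructor
  · intro hj
    have hsub : Finset.Iic j ⊆ S := fun j' hj' => hS (Finset.mem_Iic.mp hj') hj
    have := Finset.card_le_card hsub
    rw [Fin.card_Iic] at this
    omega
  · intro hj
    by_contra hjS
    have hsub : S ⊆ Finset.Iio j := fun j' hj' =>
      Finset.mem_Iio.mpr (lt_of_not_ge fun hle => hjS (hS hle hj'))
    have := Finset.card_le_card hsub
    rw [Fin.card_Iio] at this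
    omega

/-- Number of elements mapped strictly below `i`. -/
def lowLt {m n : ℕ} (f : Fin m →o Fin n) (i : Fin n) : ℕ :=
  (Finset.univ.filter fun j => f j < i).card

/-- Number of elements mapped at most `i`. -/
def lowLe {m n : ℕ} (f : Fin m →o Fin n) (i : Fin n) : ℕ :=
  (Finset.univ.filter fun j => f j ≤ i).card

lemma lt_lowLt_iff {m n : ℕ} (f : Fin m →o Fin n) (i : Fin n) (j : Fin m) :
    (j : ℕ) < lowLt f i ↔ f j < i := by
  rw [lowLt, ← mem_iff_lt_card _ (fun a b hba ha => ?_), Finset.mem_filter]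
  · simp
  · simp only [Finset.mem_filter, Finset.mem_univ, true_and] at ha ⊢
    exact lt_of_le_of_lt (f.monotone hba) ha

lemma lt_lowLe_iff {m n : ℕ} (f : Fin m →o Fin n) (i : Fin n) (j : Fin m) :
    (j : ℕ) < lowLe f i ↔ f j ≤ i := by
  rw [lowLe, ← mem_iff_lt_card _ (fun a b hba ha => ?_), Finset.mem_filter]
  · simp
  · simp only [Finset.mem_filter, Finset.mem_univ, true_and] at ha ⊢
    exact le_trans (f.monotone hba) ha

lemma eq_iff {m n : ℕ} (f : Fin m →o Fin n) (i : Fin n) (j : Fin m) :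
    f j = i ↔ lowLt f i ≤ (j : ℕ) ∧ (j : ℕ) < lowLe f i := by
  rw [lt_lowLe_iff, ← not_lt, lt_lowLt_iff]
  constructor
  · rintro rfl; exact ⟨lt_irrefl _, le_rfl⟩
  · rintro ⟨h1, h2⟩; exact le_antisymm h2 (not_lt.mp h1)

lemma lowLe_eq {m n : ℕ} (f : Fin m →o Fin n) (i : Fin n) :
    lowLe f i = lowLt f i + fiberSize f i := by
  rw [lowLe, lowLt, fiberSize, ← Finset.card_union_of_disjoint, ← Finset.filter_or]
  · congr 1; ext j; simp [le_iff_lt_or_eq]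
  · rw [Finset.disjoint_filter]
    intro j _ hlt heq
    exact absurd heq (ne_of_lt hlt)

lemma lowLt_lt_lowLe {m n : ℕ} (f : Fin m →o Fin n) (hf : Function.Surjective f) (i : Fin n) :
    lowLt f i < lowLe f i := by
  rw [lowLe_eq]
  have : 0 < fiberSize f i := by
    obtain ⟨j, hj⟩ := hf i
    exact Finset.card_pos.mpr ⟨j, by simp [hj]⟩
  omega

lemma lowLe_le_lowLt {m n : ℕ} (f : Fin m →o Fin n) {i i' : Fin n} (h : i < i') :
    lowLe f i ≤ lowLt f i' := by
  apply Finset.card_le_card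
  intro j hj
  simp only [Finset.mem_filter, Finset.mem_univ, true_and] at hj ⊢
  exact lt_of_le_of_lt hj h

lemma lowLe_le {m n : ℕ} (f : Fin m →o Fin n) (i : Fin n) : lowLe f i ≤ m := by
  simpa [lowLe] using Finset.card_le_card (Finset.filter_subset _ (Finset.univ : Finset (Fin m)))

/-- If every fiber of `e` is at least as large as the corresponding fiber of `f`,
then `e` factors through `f`. -/
lemma factorsThru_of_le {n m₁ M : ℕ} {f : Fin m₁ →o Fin (n + 1)} {e : Fin M →o Fin (n + 1)}
    (hf : Function.Surjective f) (hle : ∀ i, fiberSize f i ≤ fiberSize e i) :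
    FactorsThru e f := by
  have hm₁ : ∀ j : Fin M, min (lowLt f (e j) + ((j : ℕ) - lowLt e (e j))) (lowLe f (e j) - 1) < m₁ := by
    intro j
    have h1 := lowLt_lt_lowLe f hf (e j)
    have h2 := lowLe_le f (e j)
    omega
  set φfun : Fin M → Fin m₁ := fun j =>
    ⟨min (lowLt f (e j) + ((j : ℕ) - lowLt e (e j))) (lowLe f (e j) - 1), hm₁ j⟩ with hφfun
  have hval : ∀ j : Fin M,
      (φfun j : ℕ) = min (lowLt f (e j) + ((j : ℕ) - lowLt e (e j))) (lowLe f (e j) - 1) :=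
    fun j => rfl
  have key : ∀ j : Fin M, lowLt e (e j) ≤ (j : ℕ) ∧ (j : ℕ) < lowLe e (e j) :=
    fun j => (eq_iff e (e j) j).mp rfl
  have hφmem : ∀ j : Fin M, lowLt f (e j) ≤ (φfun j : ℕ) ∧ (φfun j : ℕ) < lowLe f (e j) := by
    intro j
    have h1 := lowLt_lt_lowLe f hf (e j)
    rw [hval j]
    omega
  have hcomm : ∀ j : Fin M, f (φfun j) = e j := fun j => (eq_iff f (e j) (φfun j)).mpr (hφmem j)
  have hmono : Monotone φfun := by
    intro j j' hjj'
    have hee : e j ≤ e j' := e.monotone hjj'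
    rw [Fin.le_def]
    rcases eq_or_lt_of_le hee with heq | hlt
    · rw [hval j, hval j', ← heq]
      have : (j : ℕ) ≤ (j' : ℕ) := hjj'
      omega
    · have h1 : (φfun j : ℕ) < lowLe f (e j) := (hφmem j).2
      have h2 : lowLe f (e j) ≤ lowLt f (e j') := lowLe_le_lowLt f hlt
      have h3 : lowLt f (e j') ≤ (φfun j' : ℕ) := (hφmem j').1
      omega
  refine ⟨⟨φfun, hmono⟩, ?_, ?_⟩
  · -- surjectivity
    intro k
    set i := f k with hi
    have hk : lowLt f i ≤ (k : ℕ) ∧ (k : ℕ) < lowLe f i := (eq_iff f i k).mp rfl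
    have hfibs : lowLe f i = lowLt f i + fiberSize f i := lowLe_eq f i
    have hfibe : lowLe e i = lowLt e i + fiberSize e i := lowLe_eq e i
    have hle' := hle i
    have hjv : lowLt e i + ((k : ℕ) - lowLt f i) < M := by
      have := lowLe_le e i
      omega
    set j : Fin M := ⟨lowLt e i + ((k : ℕ) - lowLt f i), hjv⟩ with hj
    have hej : e j = i := by
      apply (eq_iff e i j).mpr
      have hjval : (j : ℕ) = lowLt e i + ((k : ℕ) - lowLt f i) := rfl
      rw [hjval]
      omega
    refine ⟨j, ?_⟩
    apply Fin.ext
    have : ((⟨φfun, hmono⟩ : Fin M →o Fin m₁) j : ℕ) =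
        min (lowLt f (e j) + ((j : ℕ) - lowLt e (e j))) (lowLe f (e j) - 1) := hval j
    rw [this, hej]
    have hjval : (j : ℕ) = lowLt e i + ((k : ℕ) - lowLt f i) := rfl
    rw [hjval]
    omega
  · -- commutativity
    funext j
    exact (hcomm j).symm

/-- Conversely, if `e` factors through `f`, fibers of `e` dominate fibers of `f`. -/
lemma le_of_factorsThru {n m₁ M : ℕ} {f : Fin m₁ →o Fin (n + 1)} {e : Fin M →o Fin (n + 1)}
    (hef : FactorsThru e f) (i : Fin (n + 1)) : fiberSize f i ≤ fiberSize e i := by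
  obtain ⟨h, hsurj, heq⟩ := hef
  apply Finset.card_le_card_of_surjOn h
  intro k hk
  simp only [Finset.coe_filter, Set.mem_setOf_eq, Finset.mem_univ, true_and] at hk
  obtain ⟨j, hj⟩ := hsurj k
  refine ⟨j, ?_, hj⟩
  simp only [Finset.coe_filter, Set.mem_setOf_eq, Finset.mem_univ, true_and]
  rw [show (e j : Fin (n+1)) = f (h j) from congrFun heq j, hj]
  exact hk

end MaxFibersAux

/-- A surjective monotone map onto `⟨n⟩` whose fiber sizes are the pointwise maxima
of the fiber sizes of surjective monotone `f` and `g` is their meet in the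
factorization preorder: it factors through both `f` and `g`, and any surjection
factoring through both `f` and `g` factors through it. -/
theorem max_fibers_is_meet (n m₁ m₂ M : ℕ)
    (f : Fin m₁ →o Fin (n + 1)) (g : Fin m₂ →o Fin (n + 1)) (e : Fin M →o Fin (n + 1))
    (hf : Function.Surjective f) (hg : Function.Surjective g) (he : Function.Surjective e)
    (hfib : ∀ i, fiberSize e i = max (fiberSize f i) (fiberSize g i)) :
    FactorsThru e f ∧ FactorsThru e g ∧
      ∀ (m' : ℕ) (h : Fin m' →o Fin (n + 1)), Function.Surjective h →
        FactorsThru h f → FactorsThru h g → FactorsThru h e := by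
  refine ⟨?_, ?_, ?_⟩
  · exact MaxFibersAux.factorsThru_of_le hf (fun i => (hfib i) ▸ le_max_left _ _)
  · exact MaxFibersAux.factorsThru_of_le hg (fun i => (hfib i) ▸ le_max_right _ _)
  · intro m' h _ hhf hhg
    refine MaxFibersAux.factorsThru_of_le he (fun i => ?_)
    rw [hfib i]
    exact max_le (MaxFibersAux.le_of_factorsThru hhf i) (MaxFibersAux.le_of_factorsThru hhg i)
end

section
/- The presheaf Θ of nondegenerate chains is flasque: for all opens U ⊆ W in the topology D on a finite variable set V, the restriction map Θ W → Θ U is surjective. -/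
/-- Componentwise projection of a state tuple over `W` to a state tuple over `U ⊆ W`. -/
def restr {V : Type*} (Ω : V → Type*) {U W : Set V} (h : U ⊆ W)
    (x : ∀ v : W, Ω v) : ∀ v : U, Ω v :=
  fun v => x ⟨v.1, h v.2⟩

/-- Delete repeated adjacent elements of a list, obtaining the unique generating
nondegenerate chain. -/
noncomputable def condense {α : Type*} (l : List α) : List α :=
  @List.destutter α (· ≠ ·) (fun _ _ => Classical.dec _) l

/-- A relative trace over `U`: a chain in `∏_{v ∈ U} Ω_v` (componentwise preorder)
with no repeated adjacent elements (nondegenerate). -/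
def IsTrace {V : Type*} (Ω : V → Type*) [∀ v, Preorder (Ω v)] {U : Set V}
    (l : List (∀ v : U, Ω v)) : Prop :=
  l.Chain' (· ≤ ·) ∧ l.Chain' (· ≠ ·)

/-- The presheaf `Θ` of nondegenerate chains (relative traces) is flasque: for opens
`U ⊆ W` of the topology `D` on a finite set of variables `V`, with each state space
`Ω v` a nonempty preorder, the restriction map `Θ W → Θ U` (componentwise projection
followed by deletion of repeated adjacent elements) is surjective. -/
theorem theta_flasque {V : Type*} [Fintype V] (D : TopologicalSpace V)
    (Ω : V → Type*) [∀ v, Preorder (Ω v)] [∀ v, Nonempty (Ω v)]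
    (U W : Set V) (hU : @IsOpen V D U) (hW : @IsOpen V D W) (hUW : U ⊆ W)
    (t : List (∀ v : U, Ω v)) (ht : IsTrace Ω t) :
    ∃ s : List (∀ v : W, Ω v), IsTrace Ω s ∧ condense (s.map (restr Ω hUW)) = t := by
  classical
  -- extend a tuple over U to one over W by filling with arbitrary fixed values
  set ext : (∀ v : U, Ω v) → (∀ v : W, Ω v) := fun x v =>
    if h : v.1 ∈ U then x ⟨v.1, h⟩ else Classical.arbitrary (Ω v)
  have hre : ∀ x, restr Ω hUW (ext x) = x := by
    intro x
    funext v
    simp only [restr, ext, dif_pos v.2]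
  refine ⟨t.map ext, ⟨?_, ?_⟩, ?_⟩
  · show List.IsChain _ _; rw [List.isChain_map]
    refine List.IsChain.imp ?_ ht.1
    intro a b hab v
    by_cases h : v.1 ∈ U
    · simpa only [ext, dif_pos h] using hab ⟨v.1, h⟩
    · simp [ext, dif_neg h]
  · show List.IsChain _ _; rw [List.isChain_map]
    refine List.IsChain.imp ?_ ht.2
    intro a b hab h
    exact hab (by rw [← hre a, ← hre b, h])
  · rw [List.map_map]
    have : restr Ω hUW ∘ ext = id := funext hre
    rw [this, List.map_id, condense, List.destutter_eq_self_iff]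
    exact ht.2
end

section
/- The disjoint union Θ = ∐_{U ∈ D} Θ U of sets of nondegenerate relative traces, with domain map the first projection and projection given by presheaf restriction, is a tuple system over the lattice of open sets D: in particular it satisfies the amalgamation axiom (T4): if x ∈ Θ U, y ∈ Θ W and x, y have equal restrictions to U ∩ W, then there exists z ∈ Θ (U ∪ W) with z|U = x and z|W = y. -/
/-- Restriction of a relative trace to a smaller set of variables: project
componentwise, then delete repeated adjacent elements. -/
noncomputable def traceRes {V : Type*} (Ω : V → Type*) {U W : Set V} (h : U ⊆ W)
    (l : List (∀ v : W, Ω v)) : List (∀ v : U, Ω v) :=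
  condense (l.map (restr Ω h))

set_option linter.unusedSectionVars false

namespace Theta

open List

variable {α : Type*}

/-- `Dup x l` : `l` is obtained from `x` by duplicating some elements (adjacent repeats). -/
inductive Dup : List α → List α → Prop
  | nil : Dup [] []
  | cons (a : α) {l m : List α} : Dup l m → Dup (a :: l) (a :: m)
  | dup (a : α) {l m : List α} : Dup (a :: l) m → Dup (a :: l) (a :: m)

lemma Dup.nil_eq {l : List α} (h : Dup ([] : List α) l) : l = [] := by
  cases h; rfl

/-- condense as destutter' with the classical instance. -/
noncomputable def cond' (b : α) (l : List α) : List α :=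
  @List.destutter' α (· ≠ ·) (fun _ _ => Classical.dec _) b l

lemma condense_nil : condense ([] : List α) = [] := rfl

lemma condense_cons (a : α) (l : List α) : condense (a :: l) = cond' a l := rfl

lemma cond'_nil (b : α) : cond' b ([] : List α) = [b] := rfl

lemma cond'_cons_ne {b c : α} (h : b ≠ c) (l : List α) :
    cond' b (c :: l) = b :: cond' c l :=
  @List.destutter'_cons_pos α l (· ≠ ·) (fun _ _ => Classical.dec _) _ _ h

lemma cond'_cons_eq (b : α) (l : List α) : cond' b (b :: l) = cond' b l :=
  @List.destutter'_cons_neg α l (· ≠ ·) (fun _ _ => Classical.dec _) _ _ (by simp)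

lemma cond'_ne_nil (l : List α) (b : α) : cond' b l ≠ [] :=
  @List.destutter'_ne_nil α l (· ≠ ·) (fun _ _ => Classical.dec _) b

lemma cond'_head? (l : List α) (b : α) : (cond' b l).head? = some b := by
  induction l generalizing b with
  | nil => rfl
  | cons c t ih =>
    by_cases h : b = c
    · subst h; rw [cond'_cons_eq]; exact ih b
    · rw [cond'_cons_ne h]; rfl

lemma condense_head? (a : α) (l : List α) : (condense (a :: l)).head? = some a := by
  rw [condense_cons]; exact cond'_head? l a

lemma condense_eq_nil {l : List α} (h : condense l = []) : l = [] := by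
  cases l with
  | nil => rfl
  | cons a t => exact absurd h (cond'_ne_nil t a)

lemma condense_cons_cons_self (a : α) (l : List α) :
    condense (a :: a :: l) = condense (a :: l) := by
  rw [condense_cons, cond'_cons_eq, condense_cons]

lemma condense_cons_of_head_ne {a : α} {l : List α} (h : l.head? ≠ some a) :
    condense (a :: l) = a :: condense l := by
  cases l with
  | nil => rfl
  | cons c t =>
    have hac : a ≠ c := fun e => h (by simp [e])
    rw [condense_cons, cond'_cons_ne hac, condense_cons]

lemma chain'_head_ne {a : α} {x' : List α}
    (hc : (a :: x').Chain' (· ≠ ·)) : x'.head? ≠ some a := by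
  cases x' with
  | nil => simp
  | cons c t =>
    simp only [List.head?_cons, ne_eq, Option.some.injEq]
    exact fun e => (List.isChain_cons_cons.mp hc).1 e.symm

lemma Dup.cond'_eq {x l : List α} (h : Dup x l) (hc : x.Chain' (· ≠ ·)) : ∀ b : α,
    (x.head? = some b → cond' b l = b :: x.tail) ∧
    (x.head? ≠ some b → cond' b l = b :: x) := by
  induction h with
  | nil => simp [cond'_nil]
  | @cons a x' m hd ih =>
    intro b
    have hc' : x'.Chain' (· ≠ ·) := hc.tail
    have hhead : x'.head? ≠ some a := chain'_head_ne hc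
    constructor
    · intro hb
      have hba : b = a := by simpa using hb.symm
      subst hba
      rw [cond'_cons_eq, ((ih hc' b).2 hhead)]
      rfl
    · intro hb
      have hba : b ≠ a := by simpa [eq_comm] using hb
      rw [cond'_cons_ne hba, ((ih hc' a).2 hhead)]
  | @dup a x' m hd ih =>
    intro b
    constructor
    · intro hb
      have hba : b = a := by simpa using hb.symm
      subst hba
      rw [cond'_cons_eq, ((ih hc b).1 (by simp))]
    · intro hb
      have hba : b ≠ a := by simpa [eq_comm] using hb
      rw [cond'_cons_ne hba, ((ih hc a).1 (by simp))]
      rfl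

lemma Dup.condense_eq {x l : List α} (h : Dup x l) (hc : x.Chain' (· ≠ ·)) :
    condense l = x := by
  cases h with
  | nil => rfl
  | @cons a x' m hd =>
    rw [condense_cons, (hd.cond'_eq hc.tail a).2 (chain'_head_ne hc)]
  | @dup a x' m hd =>
    rw [condense_cons, (hd.cond'_eq hc a).1 (by simp)]
    rfl



open List

variable {V : Type*} (Ω : V → Type*) [∀ v, Preorder (Ω v)] {U W : Set V}

open Classical in
/-- Glue a tuple over `U` and a tuple over `W` to a tuple over `U ∪ W`
(preferring `U` on the overlap). -/
noncomputable def glue (a : ∀ v : U, Ω v) (b : ∀ v : W, Ω v) : ∀ v : ↥(U ∪ W), Ω v :=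
  fun v => if h : v.1 ∈ U then a ⟨v.1, h⟩ else b ⟨v.1, v.2.resolve_left h⟩

variable {Ω}

lemma restr_glue_left (a : ∀ v : U, Ω v) (b : ∀ v : W, Ω v) :
    restr Ω (Set.subset_union_left : U ⊆ U ∪ W) (glue Ω a b) = a :=
  funext fun v => dif_pos v.2

lemma restr_glue_right {a : ∀ v : U, Ω v} {b : ∀ v : W, Ω v}
    (hab : restr Ω (Set.inter_subset_left : U ∩ W ⊆ U) a
         = restr Ω (Set.inter_subset_right : U ∩ W ⊆ W) b) :
    restr Ω (Set.subset_union_right : W ⊆ U ∪ W) (glue Ω a b) = b := by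
  funext v
  show glue Ω a b ⟨v.1, _⟩ = b v
  unfold glue
  split
  · next h => exact congrFun hab ⟨v.1, ⟨h, v.2⟩⟩
  · rfl

lemma glue_le_glue {a a' : ∀ v : U, Ω v} {b b' : ∀ v : W, Ω v}
    (ha : a ≤ a') (hb : b ≤ b') : glue Ω a b ≤ glue Ω a' b' := by
  intro v
  unfold glue
  split
  · exact ha _
  · exact hb _

variable (Ω)

open Classical in
/-- Merge two traces into a trace on the union. -/
noncomputable def merge :
    List (∀ v : U, Ω v) → List (∀ v : W, Ω v) → List (∀ v : ↥(U ∪ W), Ω v)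
  | [], _ => []
  | _ :: _, [] => []
  | a :: xs, b :: ys =>
    glue Ω a b ::
      (if (xs.map (restr Ω (Set.inter_subset_left : U ∩ W ⊆ U))).head?
            = some (restr Ω (Set.inter_subset_left : U ∩ W ⊆ U) a) then
        merge xs (b :: ys)
      else if (ys.map (restr Ω (Set.inter_subset_right : U ∩ W ⊆ W))).head?
            = some (restr Ω (Set.inter_subset_right : U ∩ W ⊆ W) b) then
        merge (a :: xs) ys
      else merge xs ys)
  termination_by x y => x.length + y.length
  decreasing_by all_goals (simp only [List.length_cons]; omega)

variable {Ω}

lemma merge_head? (a : ∀ v : U, Ω v) (xs : List (∀ v : U, Ω v))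
    (b : ∀ v : W, Ω v) (ys : List (∀ v : W, Ω v)) :
    (merge Ω (a :: xs) (b :: ys)).head? = some (glue Ω a b) := by
  rw [merge]
  rfl



open List

variable {V : Type*} {Ω : V → Type*} [∀ v, Preorder (Ω v)] {U W : Set V}

lemma merge_nil (y : List (∀ v : W, Ω v)) : merge Ω ([] : List (∀ v : U, Ω v)) y = [] := by
  rw [merge]

lemma merge_cons_nil (a : ∀ v : U, Ω v) (xs : List (∀ v : U, Ω v)) :
    merge Ω (a :: xs) ([] : List (∀ v : W, Ω v)) = [] := by
  rw [merge]

open Classical in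
lemma merge_cons_cons (a : ∀ v : U, Ω v) (xs : List (∀ v : U, Ω v))
    (b : ∀ v : W, Ω v) (ys : List (∀ v : W, Ω v)) :
    merge Ω (a :: xs) (b :: ys) = glue Ω a b ::
      (if (xs.map (restr Ω (Set.inter_subset_left : U ∩ W ⊆ U))).head?
            = some (restr Ω (Set.inter_subset_left : U ∩ W ⊆ U) a) then
        merge Ω xs (b :: ys)
      else if (ys.map (restr Ω (Set.inter_subset_right : U ∩ W ⊆ W))).head?
            = some (restr Ω (Set.inter_subset_right : U ∩ W ⊆ W) b) then
        merge Ω (a :: xs) ys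
      else merge Ω xs ys) := by
  rw [merge]

lemma merge_spec (x : List (∀ v : U, Ω v)) (y : List (∀ v : W, Ω v)) :
    x.Chain' (· ≤ ·) → x.Chain' (· ≠ ·) → y.Chain' (· ≤ ·) → y.Chain' (· ≠ ·) →
    condense (x.map (restr Ω (Set.inter_subset_left : U ∩ W ⊆ U)))
      = condense (y.map (restr Ω (Set.inter_subset_right : U ∩ W ⊆ W))) →
    Dup x ((merge Ω x y).map (restr Ω (Set.subset_union_left : U ⊆ U ∪ W)))
    ∧ Dup y ((merge Ω x y).map (restr Ω (Set.subset_union_right : W ⊆ U ∪ W)))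
    ∧ (merge Ω x y).Chain' (· ≤ ·) ∧ (merge Ω x y).Chain' (· ≠ ·) := by
  induction x, y using merge.induct with
  | case1 y =>
    intro _ _ _ _ hagree
    have hy : y = [] := by
      apply List.map_eq_nil_iff.mp
      exact condense_eq_nil hagree.symm
    subst hy
    simp [merge_nil, Dup.nil, List.Chain', List.isChain_nil]
  | case2 a xs =>
    intro _ _ _ _ hagree
    exfalso
    have := condense_eq_nil hagree
    simp at this
  | case3 a xs b ys ih1 ih2 ih3 =>
    intro hx1 hx2 hy1 hy2 hagree
    have hab : restr Ω (Set.inter_subset_left : U ∩ W ⊆ U) a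
        = restr Ω (Set.inter_subset_right : U ∩ W ⊆ W) b := by
      have h := congrArg List.head? hagree
      simpa [condense_head?] using h
    by_cases h1 : (xs.map (restr Ω (Set.inter_subset_left : U ∩ W ⊆ U))).head?
        = some (restr Ω (Set.inter_subset_left : U ∩ W ⊆ U) a)
    · -- advance x
      have hm : merge Ω (a :: xs) (b :: ys) = glue Ω a b :: merge Ω xs (b :: ys) := by
        rw [merge_cons_cons, if_pos h1]
      obtain ⟨a', xs', rfl⟩ : ∃ a' xs', xs = a' :: xs' := by
        cases xs with
        | nil => simp at h1
        | cons a' xs' => exact ⟨a', xs', rfl⟩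
      have e : restr Ω (Set.inter_subset_left : U ∩ W ⊆ U) a'
          = restr Ω (Set.inter_subset_left : U ∩ W ⊆ U) a := by simpa using h1
      have hinv : condense ((a' :: xs').map (restr Ω (Set.inter_subset_left : U ∩ W ⊆ U)))
          = condense ((b :: ys).map (restr Ω (Set.inter_subset_right : U ∩ W ⊆ W))) := by
        rw [← hagree]
        simp only [List.map_cons]
        rw [e, condense_cons_cons_self]
      obtain ⟨d1, d2, d3, d4⟩ := ih1 hx1.tail hx2.tail hy1 hy2 hinv
      refine ⟨?_, ?_, ?_, ?_⟩
      · rw [hm]; simp only [List.map_cons, restr_glue_left]; exact Dup.cons a d1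
      · rw [hm]; simp only [List.map_cons]; rw [restr_glue_right hab]; exact Dup.dup b d2
      · rw [hm]
        refine List.isChain_cons.mpr ⟨?_, d3⟩
        intro c hc
        rw [merge_head?] at hc
        simp only [Option.mem_def, Option.some.injEq] at hc
        subst hc
        exact glue_le_glue (List.isChain_cons_cons.mp hx1).1 (le_refl b)
      · rw [hm]
        refine List.isChain_cons.mpr ⟨?_, d4⟩
        intro c hc
        rw [merge_head?] at hc
        simp only [Option.mem_def, Option.some.injEq] at hc
        subst hc
        intro e'
        have ha : a = a' := by
          have h' := congrArg (restr Ω (Set.subset_union_left : U ⊆ U ∪ W)) e'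
          rwa [restr_glue_left, restr_glue_left] at h'
        exact (List.isChain_cons_cons.mp hx2).1 ha
    · by_cases h2 : (ys.map (restr Ω (Set.inter_subset_right : U ∩ W ⊆ W))).head?
          = some (restr Ω (Set.inter_subset_right : U ∩ W ⊆ W) b)
      · -- advance y
        have hm : merge Ω (a :: xs) (b :: ys) = glue Ω a b :: merge Ω (a :: xs) ys := by
          rw [merge_cons_cons, if_neg h1, if_pos h2]
        obtain ⟨b', ys', rfl⟩ : ∃ b' ys', ys = b' :: ys' := by
          cases ys with
          | nil => simp at h2
          | cons b' ys' => exact ⟨b', ys', rfl⟩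
        have e : restr Ω (Set.inter_subset_right : U ∩ W ⊆ W) b'
            = restr Ω (Set.inter_subset_right : U ∩ W ⊆ W) b := by simpa using h2
        have hab' : restr Ω (Set.inter_subset_left : U ∩ W ⊆ U) a
            = restr Ω (Set.inter_subset_right : U ∩ W ⊆ W) b' := hab.trans e.symm
        have hinv : condense ((a :: xs).map (restr Ω (Set.inter_subset_left : U ∩ W ⊆ U)))
            = condense ((b' :: ys').map (restr Ω (Set.inter_subset_right : U ∩ W ⊆ W))) := by
          rw [hagree]
          simp only [List.map_cons]
          rw [e, condense_cons_cons_self]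
        obtain ⟨d1, d2, d3, d4⟩ := ih2 hx1 hx2 hy1.tail hy2.tail hinv
        refine ⟨?_, ?_, ?_, ?_⟩
        · rw [hm]; simp only [List.map_cons, restr_glue_left]; exact Dup.dup a d1
        · rw [hm]; simp only [List.map_cons]; rw [restr_glue_right hab]; exact Dup.cons b d2
        · rw [hm]
          refine List.isChain_cons.mpr ⟨?_, d3⟩
          intro c hc
          rw [merge_head?] at hc
          simp only [Option.mem_def, Option.some.injEq] at hc
          subst hc
          exact glue_le_glue (le_refl a) (List.isChain_cons_cons.mp hy1).1
        · rw [hm]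
          refine List.isChain_cons.mpr ⟨?_, d4⟩
          intro c hc
          rw [merge_head?] at hc
          simp only [Option.mem_def, Option.some.injEq] at hc
          subst hc
          intro e'
          have hb : b = b' := by
            have h' := congrArg (restr Ω (Set.subset_union_right : W ⊆ U ∪ W)) e'
            rwa [restr_glue_right hab, restr_glue_right hab'] at h'
          exact (List.isChain_cons_cons.mp hy2).1 hb
      · -- advance both
        have hm : merge Ω (a :: xs) (b :: ys) = glue Ω a b :: merge Ω xs ys := by
          rw [merge_cons_cons, if_neg h1, if_neg h2]
        have e1 : condense ((a :: xs).map (restr Ω (Set.inter_subset_left : U ∩ W ⊆ U)))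
            = restr Ω (Set.inter_subset_left : U ∩ W ⊆ U) a
              :: condense (xs.map (restr Ω (Set.inter_subset_left : U ∩ W ⊆ U))) := by
          simp only [List.map_cons]
          exact condense_cons_of_head_ne h1
        have e2 : condense ((b :: ys).map (restr Ω (Set.inter_subset_right : U ∩ W ⊆ W)))
            = restr Ω (Set.inter_subset_right : U ∩ W ⊆ W) b
              :: condense (ys.map (restr Ω (Set.inter_subset_right : U ∩ W ⊆ W))) := by
          simp only [List.map_cons]
          exact condense_cons_of_head_ne h2
        have hinv : condense (xs.map (restr Ω (Set.inter_subset_left : U ∩ W ⊆ U)))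
            = condense (ys.map (restr Ω (Set.inter_subset_right : U ∩ W ⊆ W))) := by
          have h' := hagree
          rw [e1, e2] at h'
          exact (List.cons_eq_cons.mp h').2
        obtain ⟨d1, d2, d3, d4⟩ := ih3 hx1.tail hx2.tail hy1.tail hy2.tail hinv
        refine ⟨?_, ?_, ?_, ?_⟩
        · rw [hm]; simp only [List.map_cons, restr_glue_left]; exact Dup.cons a d1
        · rw [hm]; simp only [List.map_cons]; rw [restr_glue_right hab]; exact Dup.cons b d2
        · rw [hm]
          refine List.isChain_cons.mpr ⟨?_, d3⟩
          intro c hc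
          cases xs with
          | nil => rw [merge_nil] at hc; simp at hc
          | cons a' xs' =>
            cases ys with
            | nil => rw [merge_cons_nil] at hc; simp at hc
            | cons b' ys' =>
              rw [merge_head?] at hc
              simp only [Option.mem_def, Option.some.injEq] at hc
              subst hc
              exact glue_le_glue (List.isChain_cons_cons.mp hx1).1 (List.isChain_cons_cons.mp hy1).1
        · rw [hm]
          refine List.isChain_cons.mpr ⟨?_, d4⟩
          intro c hc
          cases xs with
          | nil => rw [merge_nil] at hc; simp at hc
          | cons a' xs' =>
            cases ys with
            | nil => rw [merge_cons_nil] at hc; simp at hc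
            | cons b' ys' =>
              rw [merge_head?] at hc
              simp only [Option.mem_def, Option.some.injEq] at hc
              subst hc
              intro e'
              have ha : a = a' := by
                have h' := congrArg (restr Ω (Set.subset_union_left : U ⊆ U ∪ W)) e'
                rwa [restr_glue_left, restr_glue_left] at h'
              exact (List.isChain_cons_cons.mp hx2).1 ha

end Theta

/-- The amalgamation axiom (T4) for the tuple system of relative traces: if the
relative traces `x` over the open set `U` and `y` over the open set `W` have equal
restrictions to `U ∩ W`, then there is a relative trace `z` over `U ∪ W` restricting
to `x` on `U` and to `y` on `W`. -/
theorem theta_tuple_system_amalgamation {V : Type*} [Fintype V] (D : TopologicalSpace V)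
    (Ω : V → Type*) [∀ v, Preorder (Ω v)] [∀ v, Nonempty (Ω v)]
    (U W : Set V) (hU : @IsOpen V D U) (hW : @IsOpen V D W)
    (x : List (∀ v : U, Ω v)) (y : List (∀ v : W, Ω v))
    (hx : IsTrace Ω x) (hy : IsTrace Ω y)
    (hagree : traceRes Ω (Set.inter_subset_left : U ∩ W ⊆ U) x
      = traceRes Ω (Set.inter_subset_right : U ∩ W ⊆ W) y) :
    ∃ z : List (∀ v : ↥(U ∪ W), Ω v), IsTrace Ω z ∧
      traceRes Ω (Set.subset_union_left : U ⊆ U ∪ W) z = x ∧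
      traceRes Ω (Set.subset_union_right : W ⊆ U ∪ W) z = y := by
  obtain ⟨hx1, hx2⟩ := hx
  obtain ⟨hy1, hy2⟩ := hy
  obtain ⟨d1, d2, d3, d4⟩ := Theta.merge_spec x y hx1 hx2 hy1 hy2 hagree
  exact ⟨Theta.merge Ω x y, ⟨d3, d4⟩, d1.condense_eq hx2, d2.condense_eq hy2⟩
end

section
/- Given a tuple system (T, L) over a lattice L, the set of relations R_T = ∐_{U∈L} P(T_U) (where T_U = {x ∈ T : d x = U}), with domain d R = U for R ⊆ T_U, projection R↓W = {x↓W : x ∈ R}, and combination R ⊗ S = {x ∈ T : d x = d R ∨ d S, x↓(d R) ∈ R, x↓(d S) ∈ S}, satisfies the combination axiom: for R with domain U, S with domain W, and any Q with U ≤ Q ≤ U ∨ W, (R ⊗ S)↓Q = R ⊗ (S↓(Q ∧ W)). -/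
/-- A tuple system over a lattice `L`: a set `T` with a domain map `d : T → L` and a
partial projection `proj x U` (defined for `U ≤ d x`), satisfying axioms (T1)–(T5). -/
structure TupleSystem (L : Type*) [Lattice L] where
  T : Type*
  d : T → L
  proj : (x : T) → (U : L) → U ≤ d x → T
  /-- (T1) -/
  d_proj : ∀ (x : T) (U : L) (h : U ≤ d x), d (proj x U h) = U
  /-- (T2) -/
  proj_trans : ∀ (x : T) (U W : L) (hU : U ≤ d x) (hWU : W ≤ U) (hW : W ≤ d x)
      (h' : W ≤ d (proj x U hU)), proj (proj x U hU) W h' = proj x W hW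
  /-- (T3) -/
  proj_dom : ∀ (x : T) (h : d x ≤ d x), proj x (d x) h = x
  /-- (T4) amalgamation -/
  amalg : ∀ (x y : T) (h1 : d x ⊓ d y ≤ d x) (h2 : d x ⊓ d y ≤ d y),
      proj x (d x ⊓ d y) h1 = proj y (d x ⊓ d y) h2 →
      ∃ (z : T) (hx : d x ≤ d z) (hy : d y ≤ d z),
        d z = d x ⊔ d y ∧ proj z (d x) hx = x ∧ proj z (d y) hy = y
  /-- (T5) extension -/
  extend : ∀ (x : T) (W : L), d x ≤ W →
      ∃ y : T, d y = W ∧ ∃ h : d x ≤ d y, proj y (d x) h = x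

variable {L : Type*} [Lattice L]

/-- The set `T_U` of tuples with domain `U`. -/
def TupleSystem.TSet (TS : TupleSystem L) (U : L) : Set TS.T := {x | TS.d x = U}

/-- Projection of a relation: `R↓W = {x↓W : x ∈ R}`. -/
def TupleSystem.rproj (TS : TupleSystem L) (R : Set TS.T) (W : L) : Set TS.T :=
  {y | ∃ x ∈ R, ∃ h : W ≤ TS.d x, y = TS.proj x W h}

/-- Combination of relations with domains `U` and `W`:
`R ⊗ S = {z : d z = U ⊔ W, z↓U ∈ R, z↓W ∈ S}`. -/
def TupleSystem.rcomb (TS : TupleSystem L) (R S : Set TS.T) (U W : L) : Set TS.T :=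
  {z | TS.d z = U ⊔ W ∧ (∃ h : U ≤ TS.d z, TS.proj z U h ∈ R) ∧
    (∃ h : W ≤ TS.d z, TS.proj z W h ∈ S)}

/-- The combination axiom (I6) for the information algebra of relations over a tuple
system on a distributive lattice: for relations `R` over `U` and `S` over `W`, and
any `Q` with `U ≤ Q ≤ U ⊔ W`, one has `(R ⊗ S)↓Q = R ⊗ (S↓(Q ⊓ W))`. -/
theorem rcomb_combination_axiom {L : Type*} [DistribLattice L] (TS : TupleSystem L)
    (U W Q : L) (R S : Set TS.T)
    (hR : ∀ x ∈ R, TS.d x = U) (hS : ∀ x ∈ S, TS.d x = W)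
    (hUQ : U ≤ Q) (hQ : Q ≤ U ⊔ W) :
    TS.rproj (TS.rcomb R S U W) Q = TS.rcomb R (TS.rproj S (Q ⊓ W)) U (Q ⊓ W) := by
  have proj_congr : ∀ (x : TS.T) (A B : L) (hA : A ≤ TS.d x) (hB : B ≤ TS.d x),
      A = B → TS.proj x A hA = TS.proj x B hB := by
    rintro x A B hA hB rfl; rfl
  have proj_tcongr : ∀ (a b : TS.T) (A : L) (ha : A ≤ TS.d a) (hb : A ≤ TS.d b),
      a = b → TS.proj a A ha = TS.proj b A hb := by
    rintro a b A ha hb rfl; rfl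
  have hQeq : Q = U ⊔ (Q ⊓ W) := by
    calc Q = Q ⊓ (U ⊔ W) := (inf_eq_left.mpr hQ).symm
    _ = (Q ⊓ U) ⊔ (Q ⊓ W) := inf_sup_left _ _ _
    _ = U ⊔ (Q ⊓ W) := by rw [inf_eq_right.mpr hUQ]
  have hQW : Q ⊔ W = U ⊔ W :=
    le_antisymm (sup_le hQ le_sup_right) (sup_le_sup_right hUQ W)
  ext z
  constructor
  · rintro ⟨x, ⟨hdx, ⟨hU', hxU⟩, ⟨hW', hxW⟩⟩, hQx, rfl⟩
    have hdQ : TS.d (TS.proj x Q hQx) = Q := TS.d_proj x Q hQx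
    refine ⟨by rw [hdQ]; exact hQeq, ⟨hUQ.trans_eq hdQ.symm, ?_⟩,
      ⟨(inf_le_left : Q ⊓ W ≤ Q).trans_eq hdQ.symm, ?_⟩⟩
    · rw [TS.proj_trans x Q U hQx hUQ hU']
      exact hxU
    · rw [TS.proj_trans x Q (Q ⊓ W) hQx inf_le_left (le_trans inf_le_left hQx)]
      refine ⟨TS.proj x W hW', hxW, ?_, ?_⟩
      · rw [TS.d_proj]; exact inf_le_right
      · rw [TS.proj_trans x W (Q ⊓ W) hW' inf_le_right (le_trans inf_le_left hQx)]
  · rintro ⟨hdz, ⟨hUz, hzU⟩, ⟨hQWz, y, hyS, hQWy, hproj⟩⟩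
    have hdzQ : TS.d z = Q := by rw [hdz]; exact hQeq.symm
    have hdyW : TS.d y = W := hS y hyS
    have hinf : TS.d z ⊓ TS.d y = Q ⊓ W := by rw [hdzQ, hdyW]
    have hamalg := TS.amalg z y inf_le_left inf_le_right
      (by
        rw [proj_congr z (TS.d z ⊓ TS.d y) (Q ⊓ W) inf_le_left
            (hdzQ ▸ inf_le_left) hinf,
          proj_congr y (TS.d z ⊓ TS.d y) (Q ⊓ W) inf_le_right
            (hdyW ▸ inf_le_right) hinf]
        exact hproj)
    obtain ⟨x, hx, hy, hdx, hxz, hxy⟩ := hamalg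
    have hdxUW : TS.d x = U ⊔ W := by rw [hdx, hdzQ, hdyW, hQW]
    have hUx : U ≤ TS.d x := by rw [hdxUW]; exact le_sup_left
    have hWx : W ≤ TS.d x := by rw [hdxUW]; exact le_sup_right
    have hQx : Q ≤ TS.d x := by rw [hdxUW]; exact le_trans hQ le_rfl
    refine ⟨x, ⟨hdxUW, ⟨hUx, ?_⟩, ⟨hWx, ?_⟩⟩, hQx, ?_⟩
    · have := TS.proj_trans x (TS.d z) U hx (hUQ.trans_eq hdzQ.symm) hUx
        (by rw [TS.d_proj]; exact hUQ.trans_eq hdzQ.symm)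
      rw [this.symm.trans (proj_tcongr _ z U _ hUz hxz)]
      exact hzU
    · rw [proj_congr x W (TS.d y) hWx hy hdyW.symm, hxy]
      exact hyS
    · have := TS.proj_trans x (TS.d z) Q hx hdzQ.ge hQx
        (by rw [TS.d_proj]; exact hdzQ.ge)
      exact (this.symm.trans ((proj_tcongr _ z Q _ hdzQ.ge hxz).trans
        ((proj_congr z Q (TS.d z) hdzQ.ge le_rfl hdzQ.symm).trans
          (TS.proj_dom z le_rfl)))).symm
end

section
/- In an adjoint ordered information algebra, a knowledgebase K = {φ₁,...,φₙ} agrees globally if and only if the combination γ = φ₁ ⊗ ⋯ ⊗ φₙ satisfies γ↓(d φᵢ) = φᵢ for all i; in that case γ is the greatest truth valuation for K. -/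
open TopologicalSpace

/-- An information algebra over a topological space `X`: valuations `Phi` labelled by
open domains, with projection and combination satisfying axioms (I1)–(I9). -/
structure InfoAlg (X : Type*) [TopologicalSpace X] where
  Phi : Type*
  d : Phi → Opens X
  proj : (φ : Phi) → (U : Opens X) → U ≤ d φ → Phi
  comb : Phi → Phi → Phi
  one : Opens X → Phi
  zero : Opens X → Phi
  /-- (I1) -/
  comb_assoc : ∀ φ ψ χ, comb (comb φ ψ) χ = comb φ (comb ψ χ)
  comb_comm : ∀ φ ψ, comb φ ψ = comb ψ φ
  /-- (I2) -/
  d_proj : ∀ (φ : Phi) (U : Opens X) (h : U ≤ d φ), d (proj φ U h) = U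
  /-- (I3) -/
  proj_trans : ∀ (φ : Phi) (U W : Opens X) (hU : U ≤ d φ) (hWU : W ≤ U) (hW : W ≤ d φ)
      (h' : W ≤ d (proj φ U hU)), proj (proj φ U hU) W h' = proj φ W hW
  /-- (I4) -/
  proj_dom : ∀ (φ : Phi) (h : d φ ≤ d φ), proj φ (d φ) h = φ
  /-- (I5) -/
  d_comb : ∀ φ ψ, d (comb φ ψ) = d φ ⊔ d ψ
  /-- (I6) -/
  comb_ax : ∀ (φ ψ : Phi) (Q : Opens X), d φ ≤ Q → Q ≤ d φ ⊔ d ψ →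
      ∀ (hQ : Q ≤ d (comb φ ψ)) (hW : Q ⊓ d ψ ≤ d ψ),
      proj (comb φ ψ) Q hQ = comb φ (proj ψ (Q ⊓ d ψ) hW)
  /-- (I7) -/
  d_one : ∀ U, d (one U) = U
  comb_one : ∀ (φ : Phi) (U : Opens X), d φ = U → comb φ (one U) = φ
  one_comb : ∀ (φ : Phi) (U : Opens X), d φ = U → comb (one U) φ = φ
  one_one : ∀ U W, comb (one U) (one W) = one (U ⊔ W)
  /-- (I8) -/
  d_zero : ∀ U, d (zero U) = U
  comb_zero : ∀ (φ : Phi) (U : Opens X), d φ = U → comb φ (zero U) = zero U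
  zero_comb : ∀ (φ : Phi) (U : Opens X), d φ = U → comb (zero U) φ = zero U
  proj_zero_iff : ∀ (φ : Phi) (U W : Opens X) (h : W ≤ d φ), d φ = U →
      (proj φ W h = zero W ↔ φ = zero U)
  /-- (I9) -/
  idem : ∀ (φ : Phi) (U : Opens X) (h : U ≤ d φ), comb φ (proj φ U h) = φ

/-- An ordered information algebra: an information algebra with a partial order on
valuations (where `φ ≤ ψ` means `ψ` is less informative) satisfying (O1)–(O4). -/
structure OrderedInfoAlg (X : Type*) [TopologicalSpace X] extends InfoAlg X where
  le : Phi → Phi → Prop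
  le_refl : ∀ φ, le φ φ
  le_trans : ∀ φ ψ χ, le φ ψ → le ψ χ → le φ χ
  le_antisymm : ∀ φ ψ, le φ ψ → le ψ φ → φ = ψ
  /-- (O1): comparable valuations have equal domains -/
  le_dom : ∀ φ ψ, le φ ψ → d φ = d ψ
  /-- (O1): infima of subsets of `Φ_U` exist -/
  inf_exists : ∀ (U : Opens X) (Ψ : Set Phi), (∀ ψ ∈ Ψ, d ψ = U) →
      ∃ ι, d ι = U ∧ (∀ ψ ∈ Ψ, le ι ψ) ∧
        ∀ χ, d χ = U → (∀ ψ ∈ Ψ, le χ ψ) → le χ ι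
  /-- (O2): the null element is the infimum of `Φ_U` -/
  zero_le : ∀ (U : Opens X) (φ : Phi), d φ = U → le (zero U) φ
  /-- (O3): monotonicity of combination -/
  comb_mono : ∀ φ₁ φ₂ ψ₁ ψ₂, le φ₁ φ₂ → le ψ₁ ψ₂ → le (comb φ₁ ψ₁) (comb φ₂ ψ₂)
  /-- (O4): monotonicity of projection -/
  proj_mono : ∀ (φ ψ : Phi) (U : Opens X) (hφ : U ≤ d φ) (hψ : U ≤ d ψ),
      le φ ψ → le (proj φ U hφ) (proj ψ U hψ)

/-- An ordered information algebra is adjoint if combination is right adjoint to the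
pair of restrictions. -/
def OrderedInfoAlg.IsAdjoint {X : Type*} [TopologicalSpace X]
    (A : OrderedInfoAlg X) : Prop :=
  (∀ (φ : A.Phi) (U W : Opens X), A.d φ = U ⊔ W →
    ∀ (hU : U ≤ A.d φ) (hW : W ≤ A.d φ),
      A.le φ (A.comb (A.proj φ U hU) (A.proj φ W hW))) ∧
  (∀ (φ ψ : A.Phi) (hU : A.d φ ≤ A.d (A.comb φ ψ)) (hW : A.d ψ ≤ A.d (A.comb φ ψ)),
    A.le (A.proj (A.comb φ ψ) (A.d φ) hU) φ ∧
      A.le (A.proj (A.comb φ ψ) (A.d ψ) hW) ψ)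

/-- The combination `φ₁ ⊗ ⋯ ⊗ φₙ` of a (nonempty) knowledgebase. -/
def combFin {X : Type*} [TopologicalSpace X] (A : InfoAlg X) :
    ∀ {n : ℕ}, (Fin (n + 1) → A.Phi) → A.Phi
  | 0, φ => φ 0
  | n + 1, φ => A.comb (combFin A fun i => φ i.castSucc) (φ (Fin.last (n + 1)))


section Aux

variable {X : Type*} [TopologicalSpace X]

lemma InfoAlg.proj_congr (A : InfoAlg X) (φ : A.Phi)
    {U U' : Opens X} (e : U = U') (h : U ≤ A.d φ) (h' : U' ≤ A.d φ) :
    A.proj φ U h = A.proj φ U' h' := by subst e; rfl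

lemma sup_univ_fin_succ {n : ℕ} (f : Fin (n + 2) → Opens X) :
    Finset.univ.sup f
      = (Finset.univ.sup fun i : Fin (n + 1) => f i.castSucc) ⊔ f (Fin.last (n + 1)) := by
  rw [Fin.univ_castSuccEmb, Finset.sup_cons, Finset.sup_map]
  simp [sup_comm]
  rfl

lemma d_combFin (A : InfoAlg X) :
    ∀ {n : ℕ} (φ : Fin (n + 1) → A.Phi),
      A.d (combFin A φ) = Finset.univ.sup (fun i => A.d (φ i)) := by
  intro n
  induction n with
  | zero => intro φ; simp [combFin]
  | succ n ih =>
      intro φ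
      rw [combFin, A.d_comb, ih, sup_univ_fin_succ (fun i => A.d (φ i))]

/-- Lemma B: any truth valuation is below the combination. -/
lemma combFin_ge (A : OrderedInfoAlg X) (hadj : A.IsAdjoint) :
    ∀ {n : ℕ} (φ : Fin (n + 1) → A.Phi) (δ : A.Phi),
      A.d δ = Finset.univ.sup (fun i => A.d (φ i)) →
      (∀ (i : Fin (n + 1)) (h : A.d (φ i) ≤ A.d δ), A.proj δ (A.d (φ i)) h = φ i) →
      A.le δ (combFin A.toInfoAlg φ) := by
  intro n
  induction n with
  | zero =>
      intro φ δ hd hp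
      have hd0 : A.d δ = A.d (φ 0) := by simpa using hd
      have h0 : A.d (φ 0) ≤ A.d δ := hd0.ge
      have : A.proj δ (A.d (φ 0)) h0 = φ 0 := hp 0 h0
      rw [show combFin A.toInfoAlg φ = φ 0 from rfl, ← this,
        A.toInfoAlg.proj_congr δ hd0.symm h0 le_rfl, A.proj_dom]
      exact A.le_refl δ
  | succ n ih =>
      intro φ δ hd hp
      set V := Finset.univ.sup (fun i : Fin (n + 1) => A.d (φ i.castSucc)) with hV
      set W := A.d (φ (Fin.last (n + 1))) with hW
      have hdVW : A.d δ = V ⊔ W := by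
        rw [hd, sup_univ_fin_succ (fun i => A.d (φ i))]
      have hVle : V ≤ A.d δ := hdVW.ge.trans' le_sup_left
      have hWle : W ≤ A.d δ := hdVW.ge.trans' le_sup_right
      have hadj1 := hadj.1 δ V W hdVW hVle hWle
      -- δ↓W = φ last
      have hprojW : A.proj δ W hWle = φ (Fin.last (n + 1)) := hp _ hWle
      -- δ↓V is a truth valuation for the restricted knowledgebase
      set δ' := A.proj δ V hVle with hδ'
      have hdδ' : A.d δ' = V := A.d_proj δ V hVle
      have hδ'tv : ∀ (i : Fin (n + 1)) (h : A.d (φ i.castSucc) ≤ A.d δ'),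
          A.proj δ' (A.d (φ i.castSucc)) h = φ i.castSucc := by
        intro i h
        have hle : A.d (φ i.castSucc) ≤ A.d δ :=
          (Finset.le_sup (Finset.mem_univ i)).trans hVle
        rw [A.proj_trans δ V (A.d (φ i.castSucc)) hVle (hdδ' ▸ h) hle h]
        exact hp i.castSucc hle
      have hδ'le : A.le δ' (combFin A.toInfoAlg fun i => φ i.castSucc) :=
        ih (fun i => φ i.castSucc) δ' (by rw [hdδ']) hδ'tv
      refine A.le_trans _ _ _ hadj1 ?_
      rw [hprojW]
      exact A.comb_mono _ _ _ _ hδ'le (A.le_refl _)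

/-- Lemma C: the projection of the combination is below each component. -/
lemma proj_combFin_le (A : OrderedInfoAlg X) (hadj : A.IsAdjoint) :
    ∀ {n : ℕ} (φ : Fin (n + 1) → A.Phi) (i : Fin (n + 1))
      (h : A.d (φ i) ≤ A.d (combFin A.toInfoAlg φ)),
      A.le (A.proj (combFin A.toInfoAlg φ) (A.d (φ i)) h) (φ i) := by
  intro n
  induction n with
  | zero =>
      intro φ i h
      have h0 : i = 0 := Fin.fin_one_eq_zero i
      subst h0
      have e : A.proj (combFin A.toInfoAlg φ) (A.d (φ 0)) h = φ 0 := A.proj_dom (φ 0) h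
      rw [e]
      exact A.le_refl _
  | succ n ih =>
      intro φ i h
      set γ' := combFin A.toInfoAlg fun j : Fin (n + 1) => φ j.castSucc with hγ'
      have hcf : combFin A.toInfoAlg φ = A.comb γ' (φ (Fin.last (n + 1))) := rfl
      induction i using Fin.lastCases with
      | last =>
          have hW : A.d (φ (Fin.last (n + 1))) ≤ A.d (A.comb γ' (φ (Fin.last (n + 1)))) :=
            hcf ▸ h
          have := (hadj.2 γ' (φ (Fin.last (n + 1)))
            ((A.d_comb _ _).ge.trans' le_sup_left) hW).2
          rw [show A.proj (combFin A.toInfoAlg φ) (A.d (φ (Fin.last (n + 1)))) h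
              = A.proj (A.comb γ' (φ (Fin.last (n + 1)))) (A.d (φ (Fin.last (n + 1)))) hW
            from rfl]
          exact this
      | cast j =>
          have hU : A.d γ' ≤ A.d (A.comb γ' (φ (Fin.last (n + 1)))) :=
            (A.d_comb _ _).ge.trans' le_sup_left
          have hjγ' : A.d (φ j.castSucc) ≤ A.d γ' := by
            rw [hγ', d_combFin]
            exact Finset.le_sup (f := fun i : Fin (n + 1) => A.d (φ i.castSucc))
              (Finset.mem_univ j)
          have hadj2 := (hadj.2 γ' (φ (Fin.last (n + 1))) hU
            ((A.d_comb _ _).ge.trans' le_sup_right)).1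
          have hj' : A.d (φ j.castSucc)
              ≤ A.d (A.proj (A.comb γ' (φ (Fin.last (n + 1)))) (A.d γ') hU) := by
            rw [A.d_proj]; exact hjγ'
          have htrans : A.proj (A.proj (A.comb γ' (φ (Fin.last (n + 1)))) (A.d γ') hU)
              (A.d (φ j.castSucc)) hj'
              = A.proj (combFin A.toInfoAlg φ) (A.d (φ j.castSucc)) h :=
            A.proj_trans _ _ _ hU (A.d_proj _ _ hU ▸ hj') (hcf ▸ h) hj'
          rw [← htrans]
          refine A.le_trans _ _ _
            (A.proj_mono _ _ _ hj' hjγ' hadj2) (ih (fun j => φ j.castSucc) j hjγ')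

end Aux

/-- In an adjoint ordered information algebra, a knowledgebase `K = {φ₀, …, φₙ}`
agrees globally iff `γ = φ₀ ⊗ ⋯ ⊗ φₙ` satisfies `γ↓(d φᵢ) = φᵢ` for all `i`; in that
case `γ` is the greatest truth valuation for `K`. -/
theorem global_agreement_iff_combination {X : Type*} [TopologicalSpace X]
    (A : OrderedInfoAlg X) (hadj : A.IsAdjoint) (n : ℕ) (φ : Fin (n + 1) → A.Phi) :
    ((∃ δ : A.Phi, A.d δ = Finset.univ.sup (fun i => A.d (φ i)) ∧
        ∀ (i : Fin (n + 1)) (h : A.d (φ i) ≤ A.d δ), A.proj δ (A.d (φ i)) h = φ i) ↔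
      (∀ (i : Fin (n + 1)) (h : A.d (φ i) ≤ A.d (combFin A.toInfoAlg φ)),
        A.proj (combFin A.toInfoAlg φ) (A.d (φ i)) h = φ i)) ∧
    (∀ δ : A.Phi, A.d δ = Finset.univ.sup (fun i => A.d (φ i)) →
      (∀ (i : Fin (n + 1)) (h : A.d (φ i) ≤ A.d δ), A.proj δ (A.d (φ i)) h = φ i) →
      A.le δ (combFin A.toInfoAlg φ)) := by
  have hdγ : A.d (combFin A.toInfoAlg φ) = Finset.univ.sup (fun i => A.d (φ i)) :=
    d_combFin A.toInfoAlg φ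
  constructor
  · constructor
    · rintro ⟨δ, hdδ, hδ⟩ i h
      have hδγ : A.le δ (combFin A.toInfoAlg φ) := combFin_ge A hadj φ δ hdδ hδ
      have hiδ : A.d (φ i) ≤ A.d δ := hdδ.ge.trans'
        (Finset.le_sup (f := fun i => A.d (φ i)) (Finset.mem_univ i))
      refine A.le_antisymm _ _ (proj_combFin_le A hadj φ i h) ?_
      have := A.proj_mono δ (combFin A.toInfoAlg φ) (A.d (φ i)) hiδ h hδγ
      rwa [hδ i hiδ] at this
    · intro hγ
      exact ⟨combFin A.toInfoAlg φ, hdγ, hγ⟩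
  · exact fun δ hdδ hδ => combFin_ge A hadj φ δ hdδ hδ
end
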